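/- arXiv:2201.07319 — 2 statements merged into one kernel-verified Lean document; each statement's English description precedes it below -/
import Mathlib

section
/- Let A : (0,1) → ℝ be defined by A(τ) = -(1/2)·log(Q(τ)) where Q(τ) = σ₀² + Δ(τ) with σ₀² > 0 and Δ as in the structural break model (Δ(τ) = (τ₀-τ)·((1-τ₀)/(1-τ))·c for τ ≤ τ₀, Δ(τ) = (τ-τ₀)·(τ₀/τ)·c for τ > τ₀, c > 0). Then A attains its unique maximum on (0,1) at τ₀, with A(τ₀) = -(1/2)·log(σ₀²) and A(τ) < -(1/2)·log(σ₀²) for all τ ≠ τ₀. -/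
open Set

theorem stmt3 (σ0sq c τ0 : ℝ) (hσ : 0 < σ0sq) (hc : 0 < c)
    (hτ0 : τ0 ∈ Ioo (0:ℝ) 1)
    (Δ : ℝ → ℝ)
    (hΔ : ∀ τ ∈ Ioo (0:ℝ) 1,
      Δ τ = if τ ≤ τ0 then (τ0 - τ) * ((1 - τ0) / (1 - τ)) * c
            else (τ - τ0) * (τ0 / τ) * c)
    (Q A : ℝ → ℝ)
    (hQ : ∀ τ, Q τ = σ0sq + Δ τ)
    (hA : ∀ τ, A τ = -(1/2) * Real.log (Q τ)) :
    A τ0 = -(1/2) * Real.log σ0sq ∧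
    ∀ τ ∈ Ioo (0:ℝ) 1, τ ≠ τ0 → A τ < -(1/2) * Real.log σ0sq := by
  obtain ⟨h0, h1⟩ := hτ0
  constructor
  · rw [hA, hQ, hΔ τ0 ⟨h0, h1⟩]
    simp
  · intro τ ⟨ht0, ht1⟩ hne
    have hpos : 0 < Δ τ := by
      rw [hΔ τ ⟨ht0, ht1⟩]
      rcases le_or_gt τ τ0 with h | h
      · rw [if_pos h]
        have hlt : τ < τ0 := lt_of_le_of_ne h hne
        have : 0 < (1 - τ0) / (1 - τ) := div_pos (by linarith) (by linarith)
        exact mul_pos (mul_pos (by linarith) this) hc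
      · rw [if_neg (not_le.mpr h)]
        have h1' : 0 < τ0 / τ := div_pos h0 (by linarith)
        have h2' : 0 < τ - τ0 := by linarith
        exact mul_pos (mul_pos h2' h1') hc
    have hQgt : σ0sq < Q τ := by rw [hQ]; linarith
    rw [hA]
    have := Real.log_lt_log hσ hQgt
    linarith
end

section
/- Let A(τ) = -(1/2)·log(σ₀² + Δ(τ)) with Δ as in the structural break model and A(τ₀) = -(1/2)·log(σ₀²). Then for any compact subinterval [a,b] ⊂ (0,1) containing τ₀ in its interior, there exist constants B₁ < 0 and B₂ < 0 such that for all τ ∈ [a,b], B₂·|τ - τ₀| < A(τ) - A(τ₀) < B₁·|τ - τ₀| when τ ≠ τ₀ (equivalently, A(τ) - A(τ₀) is bounded above and below by negative constant multiples of |τ - τ₀|). -/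
/-! Δ vanishes at τ₀ and is squeezed between two positive multiples of |τ - τ₀| on [a, b];
the elementary bounds `1 - 1/x ≤ log x ≤ x - 1` transfer this squeeze to
`log (σ₀² + Δ τ) - log σ₀²`, hence to `A τ - A τ₀`. -/

open Set Real

noncomputable def breakDelta (τ0 c τ : ℝ) : ℝ :=
  if τ ≤ τ0 then (τ0 - τ) * ((1 - τ0) / (1 - τ)) * c else (τ - τ0) * (τ0 / τ) * c

section breakDelta

variable {τ0 c τ : ℝ}

@[simp]
lemma breakDelta_self : breakDelta τ0 c τ0 = 0 := by
  simp [breakDelta]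

lemma mul_abs_sub_le_breakDelta (hc : 0 ≤ c) (hτ0 : τ0 ∈ Icc 0 1) (hτ : τ ∈ Ioo 0 1) :
    c * min (1 - τ0) τ0 * |τ - τ0| ≤ breakDelta τ0 c τ := by
  obtain ⟨h0τ0, hτ01⟩ := hτ0
  obtain ⟨h0τ, hτ1⟩ := hτ
  unfold breakDelta
  split_ifs with h
  · have hk : min (1 - τ0) τ0 ≤ (1 - τ0) / (1 - τ) :=
      (min_le_left _ _).trans (le_div_self (by linarith) (by linarith) (by linarith))
    calc c * min (1 - τ0) τ0 * |τ - τ0|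
        ≤ c * ((1 - τ0) / (1 - τ)) * (τ0 - τ) := by
          rw [abs_of_nonpos (by linarith), neg_sub]; gcongr
      _ = _ := by ring
  · have hk : min (1 - τ0) τ0 ≤ τ0 / τ :=
      (min_le_right _ _).trans (le_div_self h0τ0 h0τ hτ1.le)
    calc c * min (1 - τ0) τ0 * |τ - τ0|
        ≤ c * (τ0 / τ) * (τ - τ0) := by
          rw [abs_of_pos (by linarith)]; gcongr; linarith
      _ = _ := by ring

lemma breakDelta_le_mul_abs_sub {a b : ℝ} (hc : 0 ≤ c) (hτ0 : τ0 ∈ Icc 0 1) (ha : 0 < a)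
    (hb : b < 1) (hτ : τ ∈ Icc a b) :
    breakDelta τ0 c τ ≤ c * max ((1 - τ0) / (1 - b)) (τ0 / a) * |τ - τ0| := by
  obtain ⟨h0τ0, hτ01⟩ := hτ0
  obtain ⟨haτ, hτb⟩ := hτ
  unfold breakDelta
  split_ifs with h
  · have hk : (1 - τ0) / (1 - τ) ≤ max ((1 - τ0) / (1 - b)) (τ0 / a) :=
      le_max_of_le_left (by gcongr)
    calc (τ0 - τ) * ((1 - τ0) / (1 - τ)) * c
        = c * ((1 - τ0) / (1 - τ)) * (τ0 - τ) := by ring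
      _ ≤ c * max ((1 - τ0) / (1 - b)) (τ0 / a) * |τ - τ0| := by
          rw [abs_of_nonpos (by linarith), neg_sub]; gcongr
  · have hk : τ0 / τ ≤ max ((1 - τ0) / (1 - b)) (τ0 / a) :=
      le_max_of_le_right (by gcongr)
    calc (τ - τ0) * (τ0 / τ) * c
        = c * (τ0 / τ) * (τ - τ0) := by ring
      _ ≤ c * max ((1 - τ0) / (1 - b)) (τ0 / a) * |τ - τ0| := by
          rw [abs_of_pos (by linarith)]; gcongr; linarith

end breakDelta

section logIncrement

variable {s d x : ℝ}

lemma log_add_sub_log_le_div_mul {M : ℝ} (hs : 0 < s) (hd : 0 ≤ d) (hdM : d ≤ M * x) :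
    log (s + d) - log s ≤ M / s * x := by
  have hlog := log_le_sub_one_of_pos (show 0 < (s + d) / s by positivity)
  rw [log_div (by positivity) hs.ne'] at hlog
  calc log (s + d) - log s ≤ (s + d) / s - 1 := hlog
    _ = d / s := by field_simp; ring
    _ ≤ M * x / s := by gcongr
    _ = M / s * x := by ring

lemma div_mul_le_log_add_sub_log {m M : ℝ} (hs : 0 < s) (hd : 0 ≤ d) (hmd : m * x ≤ d)
    (hdM : d ≤ M) : m / (s + M) * x ≤ log (s + d) - log s := by
  have hlog := one_sub_inv_le_log_of_pos (show 0 < (s + d) / s by positivity)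
  rw [log_div (by positivity) hs.ne'] at hlog
  calc m / (s + M) * x = m * x / (s + M) := by ring
    _ ≤ d / (s + d) := div_le_div₀ hd hmd (by positivity) (by linarith)
    _ = 1 - ((s + d) / s)⁻¹ := by field_simp; ring
    _ ≤ log (s + d) - log s := hlog

end logIncrement

theorem stmt4_general (σ0sq c τ0 : ℝ) (hσ : 0 < σ0sq) (hc : 0 < c)
    (Δ : ℝ → ℝ)
    (hΔ : ∀ τ ∈ Ioo (0:ℝ) 1,
      Δ τ = if τ ≤ τ0 then (τ0 - τ) * ((1 - τ0) / (1 - τ)) * c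
            else (τ - τ0) * (τ0 / τ) * c)
    (A : ℝ → ℝ)
    (hA : ∀ τ, A τ = -(1/2) * Real.log (σ0sq + Δ τ))
    (a b : ℝ) (ha : 0 < a) (hb : b < 1)
    (hτ0ab : τ0 ∈ Ioo a b) :
    ∃ B₁ < (0:ℝ), ∃ B₂ < (0:ℝ), ∀ τ ∈ Icc a b, τ ≠ τ0 →
      B₂ * |τ - τ0| < A τ - A τ0 ∧ A τ - A τ0 < B₁ * |τ - τ0| := by
  obtain ⟨haτ0, hτ0b⟩ := hτ0ab
  have hτ0 : τ0 ∈ Icc 0 1 := ⟨by linarith, by linarith⟩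
  set m := c * min (1 - τ0) τ0
  set M := c * max ((1 - τ0) / (1 - b)) (τ0 / a)
  have hm : 0 < m := mul_pos hc (lt_min (by linarith) (by linarith))
  have hM : 0 < M := mul_pos hc (lt_max_of_lt_right (div_pos (by linarith) ha))
  have hmM : 0 < m / (σ0sq + M) := by positivity
  refine ⟨-(m / (σ0sq + M)) / 4, by linarith, -(M / σ0sq), neg_neg_of_pos (div_pos hM hσ),
    fun τ hτ hne => ?_⟩
  have hτ01 : τ ∈ Ioo 0 1 := ⟨ha.trans_le hτ.1, hτ.2.trans_lt hb⟩
  have hΔτ : Δ τ = breakDelta τ0 c τ := hΔ τ hτ01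
  have hΔτ0 : Δ τ0 = 0 := (hΔ τ0 ⟨by linarith, by linarith⟩).trans breakDelta_self
  have hlow : m * |τ - τ0| ≤ Δ τ := hΔτ ▸ mul_abs_sub_le_breakDelta hc.le hτ0 hτ01
  have hup : Δ τ ≤ M * |τ - τ0| := hΔτ ▸ breakDelta_le_mul_abs_sub hc.le hτ0 ha hb hτ
  have hdist : 0 < |τ - τ0| := abs_pos.mpr (sub_ne_zero.mpr hne)
  have hdist1 : |τ - τ0| ≤ 1 := abs_le.mpr ⟨by linarith [hτ.1], by linarith [hτ.2]⟩
  have hΔ0 : 0 ≤ Δ τ := (by positivity : 0 ≤ m * |τ - τ0|).trans hlow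
  have hlog_le := log_add_sub_log_le_div_mul hσ hΔ0 hup
  have hle_log := div_mul_le_log_add_sub_log hσ hΔ0 hlow
    (hup.trans (mul_le_of_le_one_right hM.le hdist1))
  have hdiff : A τ - A τ0 = -(1/2) * (log (σ0sq + Δ τ) - log σ0sq) := by
    rw [hA, hA, hΔτ0, add_zero]; ring
  rw [hdiff]
  constructor <;> nlinarith [div_pos hM hσ]

theorem stmt4 (σ0sq c τ0 : ℝ) (hσ : 0 < σ0sq) (hc : 0 < c)
    (hτ0 : τ0 ∈ Ioo (0:ℝ) 1)
    (Δ : ℝ → ℝ)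
    (hΔ : ∀ τ ∈ Ioo (0:ℝ) 1,
      Δ τ = if τ ≤ τ0 then (τ0 - τ) * ((1 - τ0) / (1 - τ)) * c
            else (τ - τ0) * (τ0 / τ) * c)
    (A : ℝ → ℝ)
    (hA : ∀ τ, A τ = -(1/2) * Real.log (σ0sq + Δ τ))
    (a b : ℝ) (ha : 0 < a) (hb : b < 1) (hab : a ≤ b)
    (hτ0ab : τ0 ∈ Ioo a b) :
    ∃ B₁ < (0:ℝ), ∃ B₂ < (0:ℝ), ∀ τ ∈ Icc a b, τ ≠ τ0 →
      B₂ * |τ - τ0| < A τ - A τ0 ∧ A τ - A τ0 < B₁ * |τ - τ0| :=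
  stmt4_general σ0sq c τ0 hσ hc Δ hΔ A hA a b ha hb hτ0ab
end
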